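/- Let X be a Banach space, L : D(L) ⊆ X → X a closed linear operator, T : [0,∞) → (X →L X) strongly continuous with ‖T(t) f‖ ≤ M ‖f‖, and f ∈ X such that for all t ≥ 0, ∫₀^t T(l) f dl ∈ D(L) and T(t) f = L(∫₀^t T(l) f dl) + f, with t ↦ L(∫₀^t T(l) f dl) continuous and bounded by 2M‖f‖. Then for every s > 0, letting q(s) = ∫₀^∞ e^{-st} T(t) f dt, we have q(s) ∈ D(L) and s·q(s) = L(q(s)) + f. -/

import Mathlib

open MeasureTheory Real Set Filter

/-- A linear operator `L` defined on a subspace `D` of `X` is closed if its graph is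
closed under limits of sequences. -/
def IsClosedOperator {X : Type*} [NormedAddCommGroup X] [NormedSpace ℝ X]
    (D : Subspace ℝ X) (L : D →ₗ[ℝ] X) : Prop :=
  ∀ (v : ℕ → D) (x y : X),
    Tendsto (fun n => (v n : X)) atTop (nhds x) →
    Tendsto (fun n => L (v n)) atTop (nhds y) →
    ∃ hx : x ∈ D, L ⟨x, hx⟩ = y

/-!
Laplace-transform the integrated Cauchy problem `T t f = L (∫₀ᵗ T l f) + f` against
`s e^{-st}` over `(0, ∞)`. On the right, `∫ s e^{-st} dt = 1`; on the left, integration by parts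
turns `s ∫ e^{-st} ∫₀ᵗ T l f dl dt` into `q(s)`, since `e^{-st} ∫₀ᵗ T l f dl = O(t e^{-st})`
vanishes at both ends. The operator `L` passes through the integral because its graph is a
closed subspace, and Bochner integrals of graph-valued functions stay in a closed subspace.
-/

open Topology

section ClosedGraph

variable {α : Type*} [MeasurableSpace α] {μ : Measure α}
  {E F : Type*} [NormedAddCommGroup E] [NormedSpace ℝ E] [CompleteSpace E]
  [NormedAddCommGroup F] [NormedSpace ℝ F] [CompleteSpace F]

-- The quotient map by a closed subspace commutes with the integral and kills the integrand.
theorem Submodule.integral_mem_of_isClosed {𝕜 : Type*} [RCLike 𝕜] [NormedSpace 𝕜 E]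
    {S : Submodule 𝕜 E} [IsClosed (S : Set E)]
    {g : α → E} (hg : ∀ᵐ a ∂μ, g a ∈ S) : ∫ a, g a ∂μ ∈ S := by
  by_cases hgi : Integrable g μ
  · rw [← Submodule.Quotient.mk_eq_zero, ← Submodule.mkQ_apply, ← Submodule.mkQL_apply,
      ← S.mkQL.integral_comp_comm hgi]
    refine (integral_congr_ae ?_).trans (integral_zero _ _)
    filter_upwards [hg] with a ha
    simpa using ha
  · rw [integral_undef hgi]
    exact S.zero_mem

theorem LinearPMap.IsClosed.integral_mem_graph {𝕜 : Type*} [RCLike 𝕜] [NormedSpace 𝕜 E]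
    [NormedSpace 𝕜 F] {A : E →ₗ.[𝕜] F} (hA : A.IsClosed)
    {g : α → E} {h : α → F} (hg : Integrable g μ) (hh : Integrable h μ)
    (hgh : ∀ᵐ a ∂μ, (g a, h a) ∈ A.graph) :
    (∫ a, g a ∂μ, ∫ a, h a ∂μ) ∈ A.graph := by
  have : _root_.IsClosed (A.graph : Set (E × F)) := hA
  rw [← integral_pair hg hh]
  exact Submodule.integral_mem_of_isClosed hgh

end ClosedGraph

section ClosedOperator

variable {X : Type*} [NormedAddCommGroup X] [NormedSpace ℝ X] {D : Subspace ℝ X}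
  {L : D →ₗ[ℝ] X}

theorem LinearPMap.mem_graph_mk_iff {x y : X} :
    (x, y) ∈ (LinearPMap.mk D L).graph ↔ ∃ hx : x ∈ D, L ⟨x, hx⟩ = y := by
  simp [LinearPMap.mem_graph_iff]

theorem IsClosedOperator.isClosed (hL : IsClosedOperator D L) :
    (LinearPMap.mk D L).IsClosed := by
  refine IsSeqClosed.isClosed fun p xy hp hlim => ?_
  choose v hv using fun n => (LinearPMap.mem_graph_iff _).mp (hp n)
  obtain ⟨hx, hLx⟩ := hL v xy.1 xy.2
    ((continuous_fst.tendsto _).comp hlim |>.congr fun n => (hv n).1.symm)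
    ((continuous_snd.tendsto _).comp hlim |>.congr fun n => (hv n).2.symm)
  exact LinearPMap.mem_graph_mk_iff.mpr ⟨hx, hLx⟩

end ClosedOperator

section LaplaceTransform

variable {E : Type*} [NormedAddCommGroup E] [NormedSpace ℝ E] {s : ℝ}

theorem integrableOn_Ioi_exp_neg_mul_smul {g : ℝ → E} {C : ℝ} (n : ℕ) (hs : 0 < s)
    (hg : AEStronglyMeasurable g (volume.restrict (Ioi 0)))
    (hgC : ∀ t > 0, ‖g t‖ ≤ C * t ^ n) :
    IntegrableOn (fun t => exp (-(s * t)) • g t) (Ioi 0) := by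
  have hpow : IntegrableOn (fun t : ℝ => t ^ n * exp (-(s * t))) (Ioi 0) := by
    refine (integrableOn_rpow_mul_exp_neg_mul_rpow (s := n) (p := 1)
      (neg_one_lt_zero.trans_le n.cast_nonneg) one_pos hs
      ).congr_fun (fun t _ => ?_) measurableSet_Ioi
    simp [neg_mul]
  refine (hpow.const_mul C).mono'
    ((continuous_exp.comp (by fun_prop)).aestronglyMeasurable.smul hg) ?_
  filter_upwards [ae_restrict_mem measurableSet_Ioi] with t ht
  rw [norm_smul, norm_of_nonneg (exp_nonneg _)]
  calc exp (-(s * t)) * ‖g t‖ ≤ exp (-(s * t)) * (C * t ^ n) := by gcongr; exact hgC t ht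
    _ = C * (t ^ n * exp (-(s * t))) := by ring

theorem tendsto_exp_neg_mul_smul_atTop_nhds_zero {F : ℝ → E} {C : ℝ} (hs : 0 < s)
    (hFC : ∀ t ≥ 0, ‖F t‖ ≤ C * t) :
    Tendsto (fun t => exp (-(s * t)) • F t) atTop (𝓝 0) := by
  have hlim : Tendsto (fun t : ℝ => C * (t * exp (-(s * t)))) atTop (𝓝 0) := by
    simpa [neg_mul] using (tendsto_rpow_mul_exp_neg_mul_atTop_nhds_zero 1 s hs).const_mul C
  refine squeeze_zero_norm' ?_ hlim
  filter_upwards [eventually_ge_atTop 0] with t ht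
  rw [norm_smul, norm_of_nonneg (exp_nonneg _)]
  calc exp (-(s * t)) * ‖F t‖ ≤ exp (-(s * t)) * (C * t) := by gcongr; exact hFC t ht
    _ = C * (t * exp (-(s * t))) := by ring

theorem norm_integral_zero_le_mul {g : ℝ → E} {C t : ℝ} (hgC : ∀ t ≥ 0, ‖g t‖ ≤ C)
    (ht : 0 ≤ t) : ‖∫ l in (0:ℝ)..t, g l‖ ≤ C * t := by
  simpa [abs_of_nonneg ht] using intervalIntegral.norm_integral_le_of_norm_le_const
    (a := 0) (b := t) (fun l hl => hgC l (uIoc_of_le ht ▸ hl).1.le)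

theorem integrableOn_Ioi_exp_neg_mul_smul_primitive {g : ℝ → E} {C : ℝ} (hs : 0 < s)
    (hg : Continuous g) (hgC : ∀ t ≥ 0, ‖g t‖ ≤ C) :
    IntegrableOn (fun t => exp (-(s * t)) • ∫ l in (0:ℝ)..t, g l) (Ioi 0) :=
  integrableOn_Ioi_exp_neg_mul_smul 1 hs
    (intervalIntegral.continuous_primitive hg.intervalIntegrable 0).aestronglyMeasurable
    (fun t ht => by simpa using norm_integral_zero_le_mul hgC ht.le)

theorem integral_Ioi_smul_exp_neg_mul_smul_primitive [CompleteSpace E] {g : ℝ → E} {C : ℝ}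
    (hs : 0 < s) (hg : Continuous g) (hgC : ∀ t ≥ 0, ‖g t‖ ≤ C) :
    ∫ t in Ioi 0, s • exp (-(s * t)) • ∫ l in (0:ℝ)..t, g l
      = ∫ t in Ioi 0, exp (-(s * t)) • g t := by
  set G : ℝ → E := fun t => ∫ l in (0:ℝ)..t, g l
  have hGderiv : ∀ t, HasDerivAt G (g t) t := fun t =>
    (hg.integral_hasStrictDerivAt 0 t).hasDerivAt
  have hgint : IntegrableOn (fun t => exp (-(s * t)) • g t) (Ioi 0) :=
    integrableOn_Ioi_exp_neg_mul_smul 0 hs hg.aestronglyMeasurable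
      (fun t ht => by simpa using hgC t ht.le)
  have hsGint : IntegrableOn (fun t => s • exp (-(s * t)) • G t) (Ioi 0) :=
    (integrableOn_Ioi_exp_neg_mul_smul_primitive hs hg hgC).smul s
  have hderiv : ∀ t, HasDerivAt (fun t => exp (-(s * t)) • G t)
      (exp (-(s * t)) • g t - s • exp (-(s * t)) • G t) t := fun t => by
    have hexp : HasDerivAt (fun t => exp (-(s * t))) (-s * exp (-(s * t))) t := by
      simpa [mul_comm] using ((hasDerivAt_id t).const_mul s).neg.exp
    convert hexp.fun_smul (hGderiv t) using 1
    module
  have hFTC := integral_Ioi_of_hasDerivAt_of_tendsto' (fun t _ => hderiv t)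
    (hgint.sub hsGint)
    (tendsto_exp_neg_mul_smul_atTop_nhds_zero hs fun _ => norm_integral_zero_le_mul hgC)
  rw [integral_sub hgint hsGint] at hFTC
  simp only [G, intervalIntegral.integral_same, smul_zero, sub_zero, sub_eq_zero] at hFTC
  exact hFTC.symm

theorem integral_Ioi_smul_exp_neg_mul_smul_sub [CompleteSpace E] {g : ℝ → E} (hs : 0 < s)
    (hg : IntegrableOn (fun t => exp (-(s * t)) • g t) (Ioi 0)) (x : E) :
    ∫ t in Ioi 0, s • exp (-(s * t)) • (g t - x)
      = s • (∫ t in Ioi 0, exp (-(s * t)) • g t) - x := by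
  have hexp : ∫ t in Ioi 0, s * exp (-(s * t)) = 1 := by
    rw [integral_const_mul]
    have := integral_exp_mul_Ioi (a := -s) (by linarith) 0
    simp only [neg_mul, mul_zero, exp_zero] at this
    rw [this]
    field_simp
  have hexp_int : IntegrableOn (fun t => s * exp (-(s * t))) (Ioi 0) := by
    have := (exp_neg_integrableOn_Ioi 0 hs).const_mul s
    simp only [neg_mul] at this
    exact this
  have hsplit : ∀ t, s • exp (-(s * t)) • (g t - x)
      = s • (exp (-(s * t)) • g t) - (s * exp (-(s * t))) • x := fun t => by
    simp only [smul_sub, mul_smul]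
  simp_rw [hsplit]
  have hsg : IntegrableOn (fun t => s • exp (-(s * t)) • g t) (Ioi 0) := hg.smul s
  rw [integral_sub hsg (hexp_int.smul_const x), integral_smul, integral_smul_const, hexp,
    one_smul]

end LaplaceTransform

theorem resolvent_identity_of_integrated_cauchy_problem_general
    {X : Type*} [NormedAddCommGroup X] [NormedSpace ℝ X] [CompleteSpace X]
    (D : Subspace ℝ X) (L : D →ₗ[ℝ] X) (hL : IsClosedOperator D L)
    (M : ℝ) (T : ℝ → X →L[ℝ] X)
    (hT_cont : ∀ g : X, Continuous fun t => T t g)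
    (hT_bdd : ∀ t ≥ (0:ℝ), ∀ g : X, ‖T t g‖ ≤ M * ‖g‖)
    (f : X)
    (h_mem : ∀ t ≥ (0:ℝ), (∫ l in (0:ℝ)..t, T l f) ∈ D)
    (h_cauchy : ∀ t (ht : t ≥ (0:ℝ)),
      T t f = L ⟨∫ l in (0:ℝ)..t, T l f, h_mem t ht⟩ + f) :
    ∀ s > (0:ℝ),
      ∃ hq : (∫ t in Ioi (0:ℝ), Real.exp (-(s * t)) • T t f) ∈ D,
        s • (∫ t in Ioi (0:ℝ), Real.exp (-(s * t)) • T t f)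
          = L ⟨∫ t in Ioi (0:ℝ), Real.exp (-(s * t)) • T t f, hq⟩ + f := by
  intro s hs
  have hTf_bdd : ∀ t ≥ 0, ‖T t f‖ ≤ M * ‖f‖ := fun t ht => hT_bdd t ht f
  have hTf_int : IntegrableOn (fun t => exp (-(s * t)) • T t f) (Ioi 0) :=
    integrableOn_Ioi_exp_neg_mul_smul 0 hs (hT_cont f).aestronglyMeasurable
      (fun t ht => by simpa using hTf_bdd t ht.le)
  have hTf_sub_int : IntegrableOn (fun t => exp (-(s * t)) • (T t f - f)) (Ioi 0) :=
    integrableOn_Ioi_exp_neg_mul_smul 0 hs (C := M * ‖f‖ + ‖f‖)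
      ((hT_cont f).sub continuous_const).aestronglyMeasurable fun t ht => by
        rw [pow_zero, mul_one]
        exact (norm_sub_le _ _).trans (by gcongr; exact hTf_bdd t ht.le)
  have hgraph : ∀ t ≥ 0, (∫ l in (0:ℝ)..t, T l f, T t f - f) ∈ (LinearPMap.mk D L).graph :=
    fun t ht => LinearPMap.mem_graph_mk_iff.mpr
      ⟨h_mem t ht, by rw [h_cauchy t ht, add_sub_cancel_right]⟩
  have hmem := hL.isClosed.integral_mem_graph (μ := volume.restrict (Ioi 0))
    (g := fun t => s • exp (-(s * t)) • ∫ l in (0:ℝ)..t, T l f)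
    (h := fun t => s • exp (-(s * t)) • (T t f - f))
    ((integrableOn_Ioi_exp_neg_mul_smul_primitive hs (hT_cont f) hTf_bdd).smul s)
    (hTf_sub_int.smul s)
    (by
      filter_upwards [ae_restrict_mem measurableSet_Ioi] with t ht
      exact Submodule.smul_mem _ s (Submodule.smul_mem _ _ (hgraph t ht.le)))
  rw [integral_Ioi_smul_exp_neg_mul_smul_primitive hs (hT_cont f) hTf_bdd,
    integral_Ioi_smul_exp_neg_mul_smul_sub hs hTf_int f] at hmem
  obtain ⟨hq, hLq⟩ := LinearPMap.mem_graph_mk_iff.mp hmem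
  exact ⟨hq, by rw [hLq, sub_add_cancel]⟩

theorem resolvent_identity_of_integrated_cauchy_problem
    {X : Type*} [NormedAddCommGroup X] [NormedSpace ℝ X] [CompleteSpace X]
    (D : Subspace ℝ X) (L : D →ₗ[ℝ] X) (hL : IsClosedOperator D L)
    (M : ℝ) (hM : 1 ≤ M) (T : ℝ → X →L[ℝ] X)
    (hT_cont : ∀ g : X, Continuous fun t => T t g)
    (hT_bdd : ∀ t ≥ (0:ℝ), ∀ g : X, ‖T t g‖ ≤ M * ‖g‖)
    (f : X)
    (h_mem : ∀ t ≥ (0:ℝ), (∫ l in (0:ℝ)..t, T l f) ∈ D)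
    (h_cauchy : ∀ t (ht : t ≥ (0:ℝ)),
      T t f = L ⟨∫ l in (0:ℝ)..t, T l f, h_mem t ht⟩ + f)
    (h_cont : ContinuousOn
      (fun t => if ht : t ≥ (0:ℝ) then L ⟨∫ l in (0:ℝ)..t, T l f, h_mem t ht⟩ else 0)
      (Ici 0))
    (h_bdd : ∀ t (ht : t ≥ (0:ℝ)),
      ‖L ⟨∫ l in (0:ℝ)..t, T l f, h_mem t ht⟩‖ ≤ 2 * M * ‖f‖) :
    ∀ s > (0:ℝ),
      ∃ hq : (∫ t in Ioi (0:ℝ), Real.exp (-(s * t)) • T t f) ∈ D,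
        s • (∫ t in Ioi (0:ℝ), Real.exp (-(s * t)) • T t f)
          = L ⟨∫ t in Ioi (0:ℝ), Real.exp (-(s * t)) • T t f, hq⟩ + f :=
  resolvent_identity_of_integrated_cauchy_problem_general D L hL M T hT_cont hT_bdd f h_mem h_cauchy
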